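/- (Validity of the tour symmetry-breaking inequalities.) In an instance of the tour BPCCSP admitting at least one feasible tour, there exists an optimal tour T* with the following property: for every four distinct visited vertices v₁, v₂, v₃, v₄ ∈ V(T*) whose six connecting edges e₁₂, e₁₃, e₁₄, e₂₃, e₂₄, e₃₄ all belong to E and which satisfy ℓ(e₁₂) + ℓ(e₃₄) > ℓ(e₁₃) + ℓ(e₂₄) and ℓ(e₁₂) + ℓ(e₃₄) > ℓ(e₂₃) + ℓ(e₁₄), the tour T* does not contain both e₁₂ and e₃₄. -/
import Mathlib


variable {V : Type*} [Fintype V] [DecidableEq V]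

/-- The set of endpoints of the edges of an edge set `C` (the vertices "visited" by `C`). -/
def edgeVerts (C : Finset (Sym2 V)) : Finset V :=
  Finset.univ.filter (fun v => ∃ e ∈ C, v ∈ e)

/-- Two vertices are connected in an edge set `C` if there is a path between them
using only edges of `C`. -/
def ConnIn (C : Finset (Sym2 V)) (u w : V) : Prop :=
  (SimpleGraph.fromEdgeSet (↑C : Set (Sym2 V))).Reachable u w

/-- A tour: an edge set `C ⊆ E(G)` whose induced subgraph is connected and in which every
vertex of `V(C)` has degree exactly `2`. -/
def IsTour (G : SimpleGraph V) (C : Finset (Sym2 V)) : Prop :=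
  (↑C : Set (Sym2 V)) ⊆ G.edgeSet ∧
  (∀ u ∈ edgeVerts C, ∀ w ∈ edgeVerts C, ConnIn C u w) ∧
  (∀ v ∈ edgeVerts C, (C.filter (fun e => v ∈ e)).card = 2)

/-- An instance of a budgeted prize-collecting covering subgraph problem: a finite simple
graph with a depot, nonnegative edge costs, a positive budget, nonnegative vertex prizes,
neighbourhoods, nonnegative coverage prizes, and coverage capacities. -/
structure BPCCSPInstance (V : Type*) [Fintype V] [DecidableEq V] where
  G : SimpleGraph V
  depot : V
  len : Sym2 V → ℝ
  len_nonneg : ∀ e ∈ G.edgeSet, 0 ≤ len e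
  budget : ℝ
  budget_pos : 0 < budget
  prize : V → ℝ
  prize_nonneg : ∀ v, 0 ≤ prize v
  nbhd : V → Finset V
  nbhd_not_self : ∀ v, v ∉ nbhd v
  covPrize : V → V → ℝ
  covPrize_nonneg : ∀ v w, 0 ≤ covPrize v w
  cap : V → ℕ

/-- A coverage assignment for a visited set `S`: a partial map `σ` from `V ∖ S` to `S`
such that `σ v ∈ N_v ∩ S` whenever defined, and every `w ∈ S` has at most `c_w` preimages. -/
def IsCoverAssign (I : BPCCSPInstance V) (S : Finset V) (σ : V → Option V) : Prop :=
  (∀ v w, σ v = some w → v ∉ S ∧ w ∈ S ∧ w ∈ I.nbhd v) ∧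
  (∀ w ∈ S, (Finset.univ.filter (fun v => σ v = some w)).card ≤ I.cap w)

/-- The value of a coverage assignment: the sum of `q_{v, σ(v)}` over all `v` where `σ` is
defined. -/
def assignValue (I : BPCCSPInstance V) (σ : V → Option V) : ℝ :=
  ∑ v, Option.elim (σ v) 0 (fun w => I.covPrize v w)

/-- The collected prize of a visited set `S`: the sum of the prizes of the vertices of
`S ∖ {depot}` plus the maximum value of a coverage assignment for `S`. -/
noncomputable def collectedPrize (I : BPCCSPInstance V) (S : Finset V) : ℝ :=
  (∑ v ∈ S.erase I.depot, I.prize v) +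
    sSup {x : ℝ | ∃ σ, IsCoverAssign I S σ ∧ x = assignValue I σ}

/-- A tour is feasible if it visits the depot and its cost does not exceed the budget. -/
def IsFeasibleTour (I : BPCCSPInstance V) (T : Finset (Sym2 V)) : Prop :=
  IsTour I.G T ∧ I.depot ∈ edgeVerts T ∧ (∑ e ∈ T, I.len e) ≤ I.budget

/-- A tour is optimal if it is feasible and its collected prize is maximal among all
feasible tours. -/
def IsOptimalTour (I : BPCCSPInstance V) (T : Finset (Sym2 V)) : Prop :=
  IsFeasibleTour I T ∧
    ∀ T' : Finset (Sym2 V), IsFeasibleTour I T' →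
      collectedPrize I (edgeVerts T') ≤ collectedPrize I (edgeVerts T)

set_option linter.unusedSectionVars false
open SimpleGraph

def deg (s : Finset (Sym2 V)) (v : V) : ℕ := (s.filter (fun e => v ∈ e)).card

lemma mem_edgeVerts {C : Finset (Sym2 V)} {v : V} :
    v ∈ edgeVerts C ↔ ∃ e ∈ C, v ∈ e := by
  simp [edgeVerts]

-- escape lemma
lemma walk_escape {s : Finset (Sym2 V)} (e f : Sym2 V) {x y : V}
    (p : (fromEdgeSet (↑s : Set (Sym2 V))).Walk x y) :
    ConnIn ((s.erase e).erase f) x y ∨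
      ∃ z, (z ∈ e ∨ z ∈ f) ∧ ConnIn ((s.erase e).erase f) x z := by
  induction p with
  | nil => exact Or.inl (Reachable.refl _)
  | @cons u w y h p ih =>
    rw [fromEdgeSet_adj] at h
    obtain ⟨hmem, hne⟩ := h
    by_cases h1 : s(u, w) = e
    · exact Or.inr ⟨u, Or.inl (h1 ▸ Sym2.mem_mk_left u w), Reachable.refl _⟩
    by_cases h2 : s(u, w) = f
    · exact Or.inr ⟨u, Or.inr (h2 ▸ Sym2.mem_mk_left u w), Reachable.refl _⟩
    have hadj : (fromEdgeSet (↑((s.erase e).erase f) : Set (Sym2 V))).Adj u w := by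
      rw [fromEdgeSet_adj]
      exact ⟨by simp [Finset.mem_erase, h1, h2, hmem], hne⟩
    rcases ih with h | ⟨z, hz, hr⟩
    · exact Or.inl (hadj.reachable.trans h)
    · exact Or.inr ⟨z, hz, hadj.reachable.trans hr⟩

-- collapse lemma
lemma reach_insert_collapse {s : Set (Sym2 V)} {a b : V}
    (hab : (fromEdgeSet s).Reachable a b) {x y : V}
    (h : (fromEdgeSet (insert s(a, b) s)).Reachable x y) :
    (fromEdgeSet s).Reachable x y := by
  obtain ⟨p⟩ := h
  induction p with
  | nil => exact Reachable.refl _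
  | @cons u w y h p ih =>
    rw [fromEdgeSet_adj] at h
    obtain ⟨hmem, hne⟩ := h
    rcases Set.mem_insert_iff.mp hmem with h1 | h1
    · rcases Sym2.eq_iff.mp h1 with ⟨h2, h3⟩ | ⟨h2, h3⟩
      · exact (h2 ▸ h3 ▸ hab).trans ih
      · exact (h2 ▸ h3 ▸ hab.symm).trans ih
    · exact ((fromEdgeSet_adj s).mpr ⟨h1, hne⟩).reachable.trans ih

-- degree-1 pair component
lemma comp_pair {s : Finset (Sym2 V)} {u x : V} (hux : u ≠ x)
    (he : s(u, x) ∈ s) (hdu : deg s u = 1) (hdx : deg s x = 1) {y : V}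
    (h : ConnIn s u y) : y = u ∨ y = x := by
  obtain ⟨p⟩ := h
  have key : ∀ {z y : V}, (fromEdgeSet (↑s : Set (Sym2 V))).Walk z y →
      (z = u ∨ z = x) → (y = u ∨ y = x) := by
    intro z y p
    induction p with
    | nil => exact id
    | @cons z w y h p ih =>
      intro hz
      rw [fromEdgeSet_adj] at h
      obtain ⟨hmem, hne⟩ := h
      apply ih
      have hfilter : ∀ v : V, deg s v = 1 → s(u, x) ∈ s.filter (fun e => v ∈ e) →
          s(v, w) ∈ s.filter (fun e => v ∈ e) → s(v, w) = s(u, x) := by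
        intro v hv h1 h2
        obtain ⟨a, ha⟩ := Finset.card_eq_one.mp hv
        rw [ha, Finset.mem_singleton] at h1 h2
        rw [h1, h2]
      have hmem' : s(z, w) ∈ s := Finset.mem_coe.mp hmem
      rcases hz with rfl | rfl
      · have h1 : s(z, x) ∈ s.filter (fun e => z ∈ e) := by
          simp [Finset.mem_filter, he]
        have h2 : s(z, w) ∈ s.filter (fun e => z ∈ e) := by
          simp [Finset.mem_filter, hmem']
        have := hfilter z hdu h1 h2
        rcases Sym2.eq_iff.mp this with ⟨_, h3⟩ | ⟨h3, _⟩
        · exact Or.inr h3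
        · exact absurd h3 hux
      · have h1 : s(u, z) ∈ s.filter (fun e => z ∈ e) := by
          simp [Finset.mem_filter, he]
        have h2 : s(z, w) ∈ s.filter (fun e => z ∈ e) := by
          simp [Finset.mem_filter, hmem']
        have h3 : s(z, w) = s(u, z) := by
          obtain ⟨a, ha⟩ := Finset.card_eq_one.mp hdx
          rw [ha, Finset.mem_singleton] at h1 h2
          rw [h1, h2]
        rcases Sym2.eq_iff.mp h3 with ⟨_, h4⟩ | ⟨_, h4⟩
        · exact absurd h4.symm hne
        · exact Or.inl h4
  exact key p (Or.inl rfl)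
open Classical in
lemma exists_odd_companion {s : Finset (Sym2 V)} (hnd : ∀ e ∈ s, ¬ e.IsDiag) {u : V}
    (hdu : deg s u = 1) : ∃ w, w ≠ u ∧ ConnIn s u w ∧ Odd (deg s w) := by
  classical
  set comp : Finset V := Finset.univ.filter (fun w => ConnIn s u w) with hcomp
  have hmemcomp : ∀ w, w ∈ comp ↔ ConnIn s u w := by
    intro w; simp [hcomp]
  have hclosed : ∀ e ∈ s, ∀ x y : V, x ∈ e → y ∈ e → x ∈ comp → y ∈ comp := by
    intro e he x y hx hy hxc
    induction e with
    | _ p q =>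
      have hpq : p ≠ q := by
        intro h; exact hnd _ he (by simp [Sym2.isDiag_iff_proj_eq, h])
      have hadj : (fromEdgeSet (↑s : Set (Sym2 V))).Adj p q := by
        rw [fromEdgeSet_adj]; exact ⟨Finset.mem_coe.mpr he, hpq⟩
      rw [hmemcomp] at hxc ⊢
      rcases Sym2.mem_iff.mp hx with rfl | rfl <;> rcases Sym2.mem_iff.mp hy with rfl | rfl
      · exact hxc
      · exact hxc.trans hadj.reachable
      · exact hxc.trans hadj.symm.reachable
      · exact hxc
  have heven : Even (∑ w ∈ comp, deg s w) := by
    have : ∑ w ∈ comp, deg s w = ∑ e ∈ s, (comp.filter (fun v => v ∈ e)).card := by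
      unfold deg
      simp_rw [Finset.card_filter]
      rw [Finset.sum_comm]
    rw [this]
    apply Finset.even_sum
    intro e he
    induction e with
    | _ p q =>
      have hpq : p ≠ q := by
        intro h; exact hnd _ he (by simp [Sym2.isDiag_iff_proj_eq, h])
      by_cases hp : p ∈ comp
      · have hq : q ∈ comp := hclosed _ he p q (Sym2.mem_mk_left p q) (Sym2.mem_mk_right p q) hp
        have : comp.filter (fun v => v ∈ s(p, q)) = {p, q} := by
          ext v
          simp only [Finset.mem_filter, Sym2.mem_iff, Finset.mem_insert, Finset.mem_singleton]
          constructor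
          · rintro ⟨_, h⟩; exact h
          · rintro (rfl | rfl)
            · exact ⟨hp, Or.inl rfl⟩
            · exact ⟨hq, Or.inr rfl⟩
        rw [this, Finset.card_insert_of_notMem (by simp [hpq]), Finset.card_singleton]
        exact even_two
      · have hq : q ∉ comp := fun hq =>
          hp (hclosed _ he q p (Sym2.mem_mk_right p q) (Sym2.mem_mk_left p q) hq)
        have : comp.filter (fun v => v ∈ s(p, q)) = ∅ := by
          ext v
          simp only [Finset.mem_filter, Sym2.mem_iff, Finset.notMem_empty, iff_false]
          rintro ⟨hv, rfl | rfl⟩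
          · exact hp hv
          · exact hq hv
        rw [this]; simp
  by_contra hcon
  push_neg at hcon
  have hall : ∀ w ∈ comp.erase u, Even (deg s w) := by
    intro w hw
    rw [Finset.mem_erase, hmemcomp] at hw
    exact Nat.not_odd_iff_even.mp (hcon w hw.1 hw.2)
  have hu : u ∈ comp := (hmemcomp u).mpr (Reachable.refl _)
  have : ∑ w ∈ comp, deg s w = ∑ w ∈ comp.erase u, deg s w + deg s u :=
    (Finset.sum_erase_add comp _ hu).symm
  rw [this, hdu] at heven
  obtain ⟨k, hk⟩ := Finset.even_sum (s := comp.erase u) (fun w => deg s w) hall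
  obtain ⟨m, hm⟩ := heven
  omega
lemma deg_erase_of_mem {s : Finset (Sym2 V)} {e : Sym2 V} {v : V} (he : e ∈ s) (hv : v ∈ e) :
    deg (s.erase e) v = deg s v - 1 := by
  unfold deg
  rw [Finset.filter_erase, Finset.card_erase_of_mem (Finset.mem_filter.mpr ⟨he, hv⟩)]

lemma deg_erase_of_notMem {s : Finset (Sym2 V)} {e : Sym2 V} {v : V} (hv : v ∉ e) :
    deg (s.erase e) v = deg s v := by
  unfold deg
  rw [Finset.filter_erase, Finset.erase_eq_of_notMem]
  simp [Finset.mem_filter, hv]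

lemma deg_insert_of_mem {s : Finset (Sym2 V)} {e : Sym2 V} {v : V} (he : e ∉ s) (hv : v ∈ e) :
    deg (insert e s) v = deg s v + 1 := by
  unfold deg
  rw [Finset.filter_insert, if_pos hv,
    Finset.card_insert_of_notMem]
  simp [Finset.mem_filter, he]

lemma deg_insert_of_notMem {s : Finset (Sym2 V)} {e : Sym2 V} {v : V} (hv : v ∉ e) :
    deg (insert e s) v = deg s v := by
  unfold deg
  rw [Finset.filter_insert, if_neg hv]

lemma exchange {G : SimpleGraph V} {T : Finset (Sym2 V)} (hT : IsTour G T)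
    {a b c d : V} (hab : a ≠ b) (hac : a ≠ c) (had : a ≠ d) (hbc : b ≠ c) (hbd : b ≠ d)
    (hcd : c ≠ d) (hmab : s(a, b) ∈ T) (hmcd : s(c, d) ∈ T)
    (hgad : s(a, d) ∈ G.edgeSet) (hgbc : s(b, c) ∈ G.edgeSet)
    (hreach : ConnIn ((T.erase s(a, b)).erase s(c, d)) a c) :
    ∃ T' : Finset (Sym2 V), IsTour G T' ∧ edgeVerts T' = edgeVerts T ∧
      ∀ f : Sym2 V → ℝ,
        (∑ e ∈ T', f e) + (f s(a, b) + f s(c, d)) =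
          (∑ e ∈ T, f e) + (f s(a, d) + f s(b, c)) := by
  obtain ⟨hsub, hconn, hdeg⟩ := hT
  set L : Finset (Sym2 V) := (T.erase s(a, b)).erase s(c, d) with hL
  have hdeg' : ∀ v ∈ edgeVerts T, deg T v = 2 := hdeg
  have hne_abcd : s(a, b) ≠ s(c, d) := by
    simp [Sym2.eq_iff, hac, had, hbc, hbd]
  have ha_mem : a ∈ edgeVerts T := mem_edgeVerts.mpr ⟨s(a, b), hmab, Sym2.mem_mk_left a b⟩
  have hb_mem : b ∈ edgeVerts T := mem_edgeVerts.mpr ⟨s(a, b), hmab, Sym2.mem_mk_right a b⟩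
  have hc_mem : c ∈ edgeVerts T := mem_edgeVerts.mpr ⟨s(c, d), hmcd, Sym2.mem_mk_left c d⟩
  have hd_mem : d ∈ edgeVerts T := mem_edgeVerts.mpr ⟨s(c, d), hmcd, Sym2.mem_mk_right c d⟩
  have hmcd' : s(c, d) ∈ T.erase s(a, b) := Finset.mem_erase.mpr ⟨hne_abcd.symm, hmcd⟩
  have hacd : a ∉ s(c, d) := by simp [Sym2.mem_iff, hac, had]
  have hbcd : b ∉ s(c, d) := by simp [Sym2.mem_iff, hbc, hbd]
  have hcab : c ∉ s(a, b) := by simp [Sym2.mem_iff, hac.symm, hbc.symm]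
  have hdab : d ∉ s(a, b) := by simp [Sym2.mem_iff, had.symm, hbd.symm]
  have hdegLa : deg L a = 1 := by
    rw [hL, deg_erase_of_notMem hacd, deg_erase_of_mem hmab (Sym2.mem_mk_left a b),
      hdeg' a ha_mem]
  have hdegLb : deg L b = 1 := by
    rw [hL, deg_erase_of_notMem hbcd, deg_erase_of_mem hmab (Sym2.mem_mk_right a b),
      hdeg' b hb_mem]
  have hdegLc : deg L c = 1 := by
    rw [hL, deg_erase_of_mem hmcd' (Sym2.mem_mk_left c d), deg_erase_of_notMem hcab,
      hdeg' c hc_mem]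
  have hdegLd : deg L d = 1 := by
    rw [hL, deg_erase_of_mem hmcd' (Sym2.mem_mk_right c d), deg_erase_of_notMem hdab,
      hdeg' d hd_mem]
  have hadL : s(a, d) ∉ L := by
    intro h
    rcases comp_pair had h hdegLa hdegLd hreach with h' | h'
    · exact hac h'.symm
    · exact hcd h'
  have hbcL : s(b, c) ∉ L := by
    intro h
    have h' : s(c, b) ∈ L := by rwa [Sym2.eq_swap] at h
    rcases comp_pair hbc.symm h' hdegLc hdegLb hreach.symm with h'' | h''
    · exact hac h''
    · exact hab h''
  have hne_new : s(a, d) ≠ s(b, c) := by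
    simp [Sym2.eq_iff, hab, hac, hcd.symm, fun h : d = b => hbd h.symm]
  set T' : Finset (Sym2 V) := insert s(a, d) (insert s(b, c) L) with hT'
  have hadT' : s(a, d) ∉ insert s(b, c) L := by
    simp [Finset.mem_insert, hne_new, hadL]
  have hbcL' : s(b, c) ∉ L := hbcL
  have hLsubT : L ⊆ T := (Finset.erase_subset _ _).trans (Finset.erase_subset _ _)
  have hLsubT' : L ⊆ T' := by
    intro e he; exact Finset.mem_insert_of_mem (Finset.mem_insert_of_mem he)
  have hsub' : (↑T' : Set (Sym2 V)) ⊆ G.edgeSet := by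
    intro e he
    rw [Finset.mem_coe, hT', Finset.mem_insert, Finset.mem_insert] at he
    rcases he with rfl | rfl | he
    · exact hgad
    · exact hgbc
    · exact hsub (Finset.mem_coe.mpr (hLsubT he))
  have hEV : edgeVerts T' = edgeVerts T := by
    ext v
    rw [mem_edgeVerts, mem_edgeVerts]
    constructor
    · rintro ⟨e, he, hv⟩
      rw [hT', Finset.mem_insert, Finset.mem_insert] at he
      rcases he with rfl | rfl | he
      · rcases Sym2.mem_iff.mp hv with h | h
        · exact ⟨s(a, b), hmab, by rw [h]; exact Sym2.mem_mk_left a b⟩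
        · exact ⟨s(c, d), hmcd, by rw [h]; exact Sym2.mem_mk_right c d⟩
      · rcases Sym2.mem_iff.mp hv with h | h
        · exact ⟨s(a, b), hmab, by rw [h]; exact Sym2.mem_mk_right a b⟩
        · exact ⟨s(c, d), hmcd, by rw [h]; exact Sym2.mem_mk_left c d⟩
      · exact ⟨e, hLsubT he, hv⟩
    · rintro ⟨e, he, hv⟩
      by_cases h1 : e = s(a, b)
      · rw [h1] at hv
        rcases Sym2.mem_iff.mp hv with h | h
        · exact ⟨s(a, d), Finset.mem_insert_self _ _, by rw [h]; exact Sym2.mem_mk_left a d⟩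
        · exact ⟨s(b, c), Finset.mem_insert_of_mem (Finset.mem_insert_self _ _),
            by rw [h]; exact Sym2.mem_mk_left b c⟩
      by_cases h2 : e = s(c, d)
      · rw [h2] at hv
        rcases Sym2.mem_iff.mp hv with h | h
        · exact ⟨s(b, c), Finset.mem_insert_of_mem (Finset.mem_insert_self _ _),
            by rw [h]; exact Sym2.mem_mk_right b c⟩
        · exact ⟨s(a, d), Finset.mem_insert_self _ _, by rw [h]; exact Sym2.mem_mk_right a d⟩
      · exact ⟨e, hLsubT' (Finset.mem_erase.mpr ⟨h2, Finset.mem_erase.mpr ⟨h1, he⟩⟩), hv⟩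
  have hmono : ∀ {x y : V}, ConnIn L x y → ConnIn T' x y := by
    intro x y h
    exact h.mono (fromEdgeSet_mono (by exact_mod_cast hLsubT'))
  have hadjad : (fromEdgeSet (↑T' : Set (Sym2 V))).Adj a d := by
    rw [fromEdgeSet_adj]
    exact ⟨Finset.mem_coe.mpr (Finset.mem_insert_self _ _), had⟩
  have hadjbc : (fromEdgeSet (↑T' : Set (Sym2 V))).Adj b c := by
    rw [fromEdgeSet_adj]
    exact ⟨Finset.mem_coe.mpr (Finset.mem_insert_of_mem (Finset.mem_insert_self _ _)), hbc⟩
  have hca : ConnIn T' c a := hmono hreach.symm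
  have hkey : ∀ u ∈ edgeVerts T, ConnIn T' u a := by
    intro u hu
    obtain ⟨p⟩ := hconn u hu a ha_mem
    rcases walk_escape s(a, b) s(c, d) p with h | ⟨z, hz, hr⟩
    · exact hmono h
    · have huz : ConnIn T' u z := hmono hr
      have hz4 : z = a ∨ z = b ∨ z = c ∨ z = d := by
        rcases hz with hz | hz <;> rcases Sym2.mem_iff.mp hz with rfl | rfl <;> tauto
      rcases hz4 with rfl | rfl | rfl | rfl
      · exact huz
      · exact huz.trans (hadjbc.reachable.trans hca)
      · exact huz.trans hca
      · exact huz.trans hadjad.symm.reachable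
  have hconn' : ∀ u ∈ edgeVerts T', ∀ w ∈ edgeVerts T', ConnIn T' u w := by
    intro u hu w hw
    rw [hEV] at hu hw
    exact (hkey u hu).trans (hkey w hw).symm
  have hdegT' : ∀ v ∈ edgeVerts T', deg T' v = 2 := by
    intro v hv
    have haad : a ∈ s(a, d) := Sym2.mem_mk_left a d
    have hdad : d ∈ s(a, d) := Sym2.mem_mk_right a d
    have hbbc : b ∈ s(b, c) := Sym2.mem_mk_left b c
    have hcbc : c ∈ s(b, c) := Sym2.mem_mk_right b c
    by_cases h1 : v = a
    · rw [h1, hT', deg_insert_of_mem hadT' haad,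
        deg_insert_of_notMem (by simp [Sym2.mem_iff, hab, hac]), hdegLa]
    by_cases h2 : v = b
    · rw [h2, hT', deg_insert_of_notMem (by simp [Sym2.mem_iff, hab.symm, hbd]),
        deg_insert_of_mem hbcL' hbbc, hdegLb]
    by_cases h3 : v = c
    · rw [h3, hT', deg_insert_of_notMem (by simp [Sym2.mem_iff, hac.symm, hcd]),
        deg_insert_of_mem hbcL' hcbc, hdegLc]
    by_cases h4 : v = d
    · rw [h4, hT', deg_insert_of_mem hadT' hdad,
        deg_insert_of_notMem (by simp [Sym2.mem_iff, hbd.symm, hcd.symm]), hdegLd]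
    · have hvad : v ∉ s(a, d) := by simp [Sym2.mem_iff, h1, h4]
      have hvbc : v ∉ s(b, c) := by simp [Sym2.mem_iff, h2, h3]
      have hvab : v ∉ s(a, b) := by simp [Sym2.mem_iff, h1, h2]
      have hvcd : v ∉ s(c, d) := by simp [Sym2.mem_iff, h3, h4]
      rw [hT', deg_insert_of_notMem hvad, deg_insert_of_notMem hvbc, hL,
        deg_erase_of_notMem hvcd, deg_erase_of_notMem hvab]
      exact hdeg' v (hEV ▸ hv)
  refine ⟨T', ⟨hsub', hconn', hdegT'⟩, hEV, ?_⟩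
  intro f
  have h1 : (∑ e ∈ T', f e) = f s(a, d) + (f s(b, c) + ∑ e ∈ L, f e) := by
    rw [hT', Finset.sum_insert hadT', Finset.sum_insert hbcL']
  have h2 : (∑ e ∈ L, f e) + f s(c, d) = ∑ e ∈ T.erase s(a, b), f e :=
    Finset.sum_erase_add _ _ hmcd'
  have h3 : (∑ e ∈ T.erase s(a, b), f e) + f s(a, b) = ∑ e ∈ T, f e :=
    Finset.sum_erase_add _ _ hmab
  rw [h1]
  linarith

/-- Validity of the tour symmetry-breaking inequalities: if some feasible tour exists,
there is an optimal tour T* such that for every four distinct visited vertices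
v₁, v₂, v₃, v₄ whose six connecting edges are in E and whose pair {e₁₂, e₃₄} is strictly
more expensive than both other opposite pairs, T* does not contain both e₁₂ and e₃₄. -/
theorem tour_bpccsp_symmetry_breaking_valid
    (I : BPCCSPInstance V) (hfeas : ∃ T : Finset (Sym2 V), IsFeasibleTour I T) :
    ∃ T' : Finset (Sym2 V), IsOptimalTour I T' ∧
      ∀ v₁ v₂ v₃ v₄ : V,
        v₁ ≠ v₂ → v₁ ≠ v₃ → v₁ ≠ v₄ → v₂ ≠ v₃ → v₂ ≠ v₄ → v₃ ≠ v₄ →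
        v₁ ∈ edgeVerts T' → v₂ ∈ edgeVerts T' → v₃ ∈ edgeVerts T' → v₄ ∈ edgeVerts T' →
        s(v₁, v₂) ∈ I.G.edgeSet → s(v₁, v₃) ∈ I.G.edgeSet → s(v₁, v₄) ∈ I.G.edgeSet →
        s(v₂, v₃) ∈ I.G.edgeSet → s(v₂, v₄) ∈ I.G.edgeSet → s(v₃, v₄) ∈ I.G.edgeSet →
        I.len s(v₁, v₃) + I.len s(v₂, v₄) < I.len s(v₁, v₂) + I.len s(v₃, v₄) →
        I.len s(v₂, v₃) + I.len s(v₁, v₄) < I.len s(v₁, v₂) + I.len s(v₃, v₄) →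
        ¬ (s(v₁, v₂) ∈ T' ∧ s(v₃, v₄) ∈ T') := by
  classical
  set S : Finset (Finset (Sym2 V)) := Finset.univ.filter (fun T => IsFeasibleTour I T) with hS
  obtain ⟨Tf, hTf⟩ := hfeas
  have hSne : S.Nonempty := ⟨Tf, by simp [hS, hTf]⟩
  obtain ⟨T0, hT0S, hT0max⟩ :=
    S.exists_max_image (fun T => collectedPrize I (edgeVerts T)) hSne
  set S2 : Finset (Finset (Sym2 V)) :=
    S.filter (fun T => collectedPrize I (edgeVerts T0) ≤ collectedPrize I (edgeVerts T)) with hS2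
  have hS2ne : S2.Nonempty := ⟨T0, by simp [hS2, hT0S]⟩
  obtain ⟨Tm, hTmS2, hTmmin⟩ := S2.exists_min_image (fun T => ∑ e ∈ T, I.len e) hS2ne
  obtain ⟨hTmS, hTmge⟩ := Finset.mem_filter.mp hTmS2
  have hfeasTm : IsFeasibleTour I Tm := (Finset.mem_filter.mp hTmS).2
  have hT : IsTour I.G Tm := hfeasTm.1
  have hopt : IsOptimalTour I Tm := by
    refine ⟨hfeasTm, fun T'' hT'' => ?_⟩
    exact le_trans (hT0max T'' (Finset.mem_filter.mpr ⟨Finset.mem_univ _, hT''⟩)) hTmge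
  refine ⟨Tm, hopt, ?_⟩
  intro v₁ v₂ v₃ v₄ h12 h13 h14 h23 h24 h34 hm1 hm2 hm3 hm4 g12 g13 g14 g23 g24 g34
    hlt1 hlt2 hboth
  obtain ⟨he12, he34⟩ := hboth
  set L : Finset (Sym2 V) := (Tm.erase s(v₁, v₂)).erase s(v₃, v₄) with hLdef
  have hdeg' : ∀ v ∈ edgeVerts Tm, deg Tm v = 2 := hT.2.2
  have hne1234 : s(v₁, v₂) ≠ s(v₃, v₄) := by simp [Sym2.eq_iff, h13, h14, h23, h24]
  have he34' : s(v₃, v₄) ∈ Tm.erase s(v₁, v₂) := Finset.mem_erase.mpr ⟨hne1234.symm, he34⟩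
  have h1n34 : v₁ ∉ s(v₃, v₄) := by simp [Sym2.mem_iff, h13, h14]
  have h2n34 : v₂ ∉ s(v₃, v₄) := by simp [Sym2.mem_iff, h23, h24]
  have h3n12 : v₃ ∉ s(v₁, v₂) := by simp [Sym2.mem_iff, h13.symm, h23.symm]
  have h4n12 : v₄ ∉ s(v₁, v₂) := by simp [Sym2.mem_iff, h14.symm, h24.symm]
  have hLsubTm : L ⊆ Tm := (Finset.erase_subset _ _).trans (Finset.erase_subset _ _)
  have hndiag : ∀ e ∈ L, ¬ e.IsDiag := fun e he =>
    (I.G.not_isDiag_of_mem_edgeSet (hT.1 (Finset.mem_coe.mpr (hLsubTm he))))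
  have hdegL1 : deg L v₁ = 1 := by
    rw [hLdef, deg_erase_of_notMem h1n34,
      deg_erase_of_mem he12 (Sym2.mem_mk_left v₁ v₂), hdeg' v₁ hm1]
  have hdegL3 : deg L v₃ = 1 := by
    rw [hLdef, deg_erase_of_mem he34' (Sym2.mem_mk_left v₃ v₄),
      deg_erase_of_notMem h3n12, hdeg' v₃ hm3]
  -- odd degree vertices of L are among the four
  have hodd4 : ∀ w, Odd (deg L w) → w = v₁ ∨ w = v₂ ∨ w = v₃ ∨ w = v₄ := by
    intro w hw
    by_contra hcon
    push_neg at hcon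
    obtain ⟨n1, n2, n3, n4⟩ := hcon
    have hw12 : w ∉ s(v₁, v₂) := by simp [Sym2.mem_iff, n1, n2]
    have hw34 : w ∉ s(v₃, v₄) := by simp [Sym2.mem_iff, n3, n4]
    have hLT : deg L w = deg Tm w := by
      rw [hLdef, deg_erase_of_notMem hw34, deg_erase_of_notMem hw12]
    by_cases hwm : w ∈ edgeVerts Tm
    · rw [hLT, hdeg' w hwm] at hw
      exact (by decide : ¬ Odd 2) hw
    · have h0 : deg Tm w = 0 := by
        unfold deg
        rw [Finset.card_eq_zero, Finset.filter_eq_empty_iff]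
        exact fun e he hwe => hwm (mem_edgeVerts.mpr ⟨e, he, hwe⟩)
      rw [hLT, h0] at hw
      exact (by decide : ¬ Odd 0) hw
  -- reconstruct Tm from L
  have hTm_eq : insert s(v₁, v₂) (insert s(v₃, v₄) L) = Tm := by
    rw [hLdef, Finset.insert_erase he34', Finset.insert_erase he12]
  have hchain : ConnIn L v₁ v₂ → ConnIn L v₃ v₄ → ConnIn L v₁ v₃ := by
    intro ha hb
    have h : ConnIn Tm v₁ v₃ := hT.2.1 v₁ hm1 v₃ hm3
    unfold ConnIn at h ⊢
    rw [← hTm_eq, Finset.coe_insert, Finset.coe_insert] at h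
    have ha' : (fromEdgeSet (insert s(v₃, v₄) (↑L : Set (Sym2 V)))).Reachable v₁ v₂ :=
      ha.mono (fromEdgeSet_mono (Set.subset_insert _ _))
    exact reach_insert_collapse hb (reach_insert_collapse ha' h)
  -- the case distinction
  have hcase : ConnIn L v₁ v₃ ∨ ConnIn L v₁ v₄ := by
    obtain ⟨w, hwne, hwreach, hwodd⟩ := exists_odd_companion hndiag hdegL1
    rcases hodd4 w hwodd with rfl | rfl | rfl | rfl
    · exact absurd rfl hwne
    · -- v₁ ~ v₂ in L; inspect v₃'s companion
      obtain ⟨z, hzne, hzreach, hzodd⟩ := exists_odd_companion hndiag hdegL3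
      rcases hodd4 z hzodd with rfl | rfl | rfl | rfl
      · exact Or.inl hzreach.symm
      · exact Or.inl (hwreach.trans hzreach.symm)
      · exact absurd rfl hzne
      · exact Or.inl (hchain hwreach hzreach)
    · exact Or.inl hwreach
    · exact Or.inr hwreach
  -- the final contradiction machinery
  have hfinish : ∀ T'' : Finset (Sym2 V), IsTour I.G T'' → edgeVerts T'' = edgeVerts Tm →
      (∑ e ∈ T'', I.len e) < ∑ e ∈ Tm, I.len e → False := by
    intro T'' htour hEV hlt
    have hfeas'' : IsFeasibleTour I T'' :=
      ⟨htour, hEV ▸ hfeasTm.2.1, le_of_lt (lt_of_lt_of_le hlt hfeasTm.2.2)⟩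
    have hmem'' : T'' ∈ S2 := by
      rw [hS2, Finset.mem_filter]
      refine ⟨Finset.mem_filter.mpr ⟨Finset.mem_univ _, hfeas''⟩, ?_⟩
      rw [hEV]
      exact hTmge
    exact absurd (hTmmin T'' hmem'') (not_le.mpr hlt)
  rcases hcase with hcA | hcB
  · obtain ⟨T'', htour, hEV, hsum⟩ :=
      exchange hT h12 h13 h14 h23 h24 h34 he12 he34 g14 g23 hcA
    have := hsum I.len
    exact hfinish T'' htour hEV (by linarith)
  · have he34s : s(v₄, v₃) ∈ Tm := by rwa [Sym2.eq_swap]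
    have hcB' : ConnIn ((Tm.erase s(v₁, v₂)).erase s(v₄, v₃)) v₁ v₄ := by
      rw [show s(v₄, v₃) = s(v₃, v₄) from Sym2.eq_swap]
      exact hcB
    obtain ⟨T'', htour, hEV, hsum⟩ :=
      exchange hT h12 h14 h13 h24 h23 h34.symm he12 he34s g13 g24 hcB'
    have hswap : I.len s(v₄, v₃) = I.len s(v₃, v₄) := by
      rw [show s(v₄, v₃) = s(v₃, v₄) from Sym2.eq_swap]
    have := hsum I.len
    exact hfinish T'' htour hEV (by linarith)
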